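/- Transitivity of the refinement for preservation of reduction: if LSubR L₁ L and LSubR L L₂ then LSubR L₁ L₂. -/

import Mathlib

inductive Bk | abbr | abst
deriving DecidableEq

inductive Fk | appl | cast
deriving DecidableEq

inductive Tm
| sort : Nat → Tm
| lref : Nat → Tm
| bind : Bk → Tm → Tm → Tm
| flat : Fk → Tm → Tm → Tm
deriving DecidableEq

inductive Lift : Nat → Nat → Tm → Tm → Prop
| sort (l m k) : Lift l m (.sort k) (.sort k)
| lt {l m i} : i < l → Lift l m (.lref i) (.lref i)
| ge {l m i} : l ≤ i → Lift l m (.lref i) (.lref (i + m))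
| bind {l m b W₁ W₂ T₁ T₂} : Lift l m W₁ W₂ → Lift (l + 1) m T₁ T₂ →
    Lift l m (.bind b W₁ T₁) (.bind b W₂ T₂)
| flat {l m f V₁ V₂ T₁ T₂} : Lift l m V₁ V₂ → Lift l m T₁ T₂ →
    Lift l m (.flat f V₁ T₁) (.flat f V₂ T₂)

inductive Env
| null : Env
| pair : Env → Bk → Tm → Env
deriving DecidableEq

inductive Drop : Nat → Nat → Env → Env → Prop
| atom (l) : Drop l 0 .null .null
| pair {L₁ L₂ b W} : Drop 0 0 L₁ L₂ → Drop 0 0 (.pair L₁ b W) (.pair L₂ b W)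
| drop {m L₁ L₂ b W} : Drop 0 m L₁ L₂ → Drop 0 (m + 1) (.pair L₁ b W) L₂
| skip {l m L₁ L₂ b W₁ W₂} : Drop l m L₁ L₂ → Lift l m W₂ W₁ →
    Drop (l + 1) m (.pair L₁ b W₁) (.pair L₂ b W₂)

inductive Cpr : Env → Tm → Tm → Prop
| sort {L k} : Cpr L (.sort k) (.sort k)
| lref {L i} : Cpr L (.lref i) (.lref i)
| bind {L b W₁ W₂ T₁ T₂} : Cpr L W₁ W₂ → Cpr (.pair L b W₁) T₁ T₂ →
    Cpr L (.bind b W₁ T₁) (.bind b W₂ T₂)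
| flat {L f V₁ V₂ T₁ T₂} : Cpr L V₁ V₂ → Cpr L T₁ T₂ →
    Cpr L (.flat f V₁ T₁) (.flat f V₂ T₂)
| delta {L K V₁ V₂ W₂ i} : Drop 0 i L (.pair K .abbr V₁) → Cpr K V₁ V₂ →
    Lift 0 (i + 1) V₂ W₂ → Cpr L (.lref i) W₂
| beta {L V₁ V₂ W₁ W₂ T₁ T₂} : Cpr L V₁ V₂ → Cpr L W₁ W₂ →
    Cpr (.pair L .abst W₁) T₁ T₂ →
    Cpr L (.flat .appl V₁ (.bind .abst W₁ T₁)) (.bind .abbr (.flat .cast W₂ V₂) T₂)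
| zeta {L V U₁ U₂ T₂} : Cpr (.pair L .abbr V) U₁ U₂ → Lift 0 1 T₂ U₂ →
    Cpr L (.bind .abbr V U₁) T₂
| eps {L U T₁ T₂} : Cpr L T₁ T₂ → Cpr L (.flat .cast U T₁) T₂
| theta {L V₁ V₂ W₂ U₁ U₂ T₁ T₂} : Cpr L V₁ V₂ → Lift 0 1 V₂ W₂ → Cpr L U₁ U₂ →
    Cpr (.pair L .abbr U₁) T₁ T₂ →
    Cpr L (.flat .appl V₁ (.bind .abbr U₁ T₁)) (.bind .abbr U₂ (.flat .appl W₂ T₂))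

inductive Lpr : Env → Env → Prop
| atom : Lpr .null .null
| pair {L₁ L₂ b W₁ W₂} : Lpr L₁ L₂ → Cpr L₁ W₁ W₂ → Lpr (.pair L₁ b W₁) (.pair L₂ b W₂)

inductive LsubR : Env → Env → Prop
| atom (L) : LsubR L .null
| pair {L₁ L₂ b W} : LsubR L₁ L₂ → LsubR (.pair L₁ b W) (.pair L₂ b W)
| beta {L₁ L₂ W V} : LsubR L₁ L₂ →
    LsubR (.pair L₁ .abbr (.flat .cast W V)) (.pair L₂ .abst W)

theorem lsubr_trans {L₁ L L₂ : Env}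
    (h₁ : LsubR L₁ L) (h₂ : LsubR L L₂) : LsubR L₁ L₂ := by
  induction h₁ generalizing L₂ with
  | atom => cases h₂; exact .atom _
  | pair _ ih =>
    cases h₂ with
    | atom => exact .atom _
    | pair h => exact .pair (ih h)
    | beta h => exact .beta (ih h)
  | beta _ ih =>
    cases h₂ with
    | atom => exact .atom _
    | pair h => exact .beta (ih h)
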